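/- arXiv:1212.1795 — 2 statements merged into one kernel-verified Lean document; each statement's English description precedes it below -/
import Mathlib

section
/- For every fixed k and every fixed (x_1,…,x_k) ∈ ℝ^k, the k-th correlation function of the superposition mΣ_1 ∪ … ∪ mΣ_m of m independent sine processes each rescaled by m converges to 1 as m → ∞; i.e., Σ_{p=1}^{min(m,k)} Σ_{π ∈ 𝔖(k,p)} m^{-k} (m!/(m−p)!) Π_{j=1}^p det[q((x_s − x_t)/m)]_{s,t ∈ π_j} → 1 as m → ∞. -/
/-!
As `m → ∞` every kernel entry `q((x_s - x_t)/m)` tends to `q(0) = 1`, so each block determinant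
converges, while `m^{-k} · m!/(m-p)! ~ m^{p-k}` tends to `0` unless `p = k`. The only partition of
`{1, …, k}` into `k` blocks is the partition into singletons, whose determinants are `q(0) = 1`.
-/

open Real Filter MeasureTheory

/-- The sine kernel `q(u) = sin(πu)/(πu)`, with `q(0) = 1`. -/
noncomputable def sineq (u : ℝ) : ℝ :=
  if u = 0 then 1 else Real.sin (Real.pi * u) / (Real.pi * u)

open Finset Topology Asymptotics

lemma sineq_eq_sinc (u : ℝ) : sineq u = sinc (π * u) := by
  simp [sineq, sinc, Real.pi_ne_zero]

lemma continuous_sineq : Continuous sineq := by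
  rw [funext sineq_eq_sinc]
  exact continuous_sinc.comp (continuous_const_mul π)

lemma tendsto_sineq_div_natCast (c : ℝ) :
    Tendsto (fun m : ℕ => sineq (c / m)) atTop (𝓝 1) := by
  have hq0 : sineq 0 = 1 := if_pos rfl
  exact hq0 ▸ (continuous_sineq.tendsto 0).comp (tendsto_const_div_atTop_nhds_zero_nat c)

lemma tendsto_det_sineq {ι : Type*} [Fintype ι] [DecidableEq ι] (x : ι → ℝ) :
    Tendsto (fun m : ℕ => (Matrix.of fun s t => sineq ((x s - x t) / m)).det) atTop
      (𝓝 (Matrix.of fun _ _ : ι => (1 : ℝ)).det) :=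
  ((continuous_id.matrix_det).tendsto _).comp <| tendsto_pi_nhds.2 fun s =>
    tendsto_pi_nhds.2 fun t => tendsto_sineq_div_natCast (x s - x t)

lemma tendsto_descFactorial_div_pow_self (k : ℕ) :
    Tendsto (fun m : ℕ => (m.descFactorial k : ℝ) / m ^ k) atTop (𝓝 1) := by
  refine (isEquivalent_iff_tendsto_one ?_).1 (isEquivalent_descFactorial k)
  filter_upwards [eventually_gt_atTop 0] with m hm
  positivity

lemma tendsto_descFactorial_div_pow_of_lt {p k : ℕ} (h : p < k) :
    Tendsto (fun m : ℕ => (m.descFactorial p : ℝ) / m ^ k) atTop (𝓝 0) :=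
  ((isEquivalent_descFactorial p).isBigO.trans_isLittleO
    ((isLittleO_pow_pow_atTop_of_lt h).comp_tendsto
      tendsto_natCast_atTop_atTop)).tendsto_div_nhds_zero

namespace Finpartition

variable {α : Type*} [DecidableEq α] {s : Finset α}

lemma eq_bot_of_card_parts_eq_card {P : Finpartition s} (h : #P.parts = #s) : P = ⊥ := by
  have hsum : ∑ b ∈ P.parts, 1 = ∑ b ∈ P.parts, #b := by
    rw [P.sum_card_parts, sum_const, smul_eq_mul, mul_one, h]
  have hcard : ∀ b ∈ P.parts, #b = 1 := fun b hb =>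
    ((sum_eq_sum_iff_of_le fun b hb => card_pos.2 (P.nonempty_of_mem_parts hb)).1 hsum b hb).symm
  refine le_bot_iff.1 fun b hb => ?_
  obtain ⟨a, rfl⟩ := card_eq_one.1 (hcard b hb)
  exact ⟨{a}, mem_bot_iff.2 ⟨a, singleton_subset_iff.1 (P.le hb), rfl⟩, le_rfl⟩

lemma card_parts_lt_card {P : Finpartition s} (hP : P ≠ ⊥) : #P.parts < #s :=
  P.card_parts_le_card.lt_of_ne fun h => hP (eq_bot_of_card_parts_eq_card h)

lemma sum_Icc_sum_filter_card_parts {M : Type*} [AddCommMonoid M] (hs : s.Nonempty) {n : ℕ}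
    (hn : #s ≤ n) (f : ℕ → Finpartition s → M) :
    ∑ p ∈ Icc 1 n, ∑ P ∈ univ.filter (fun P : Finpartition s => #P.parts = p), f p P =
      ∑ P, f #P.parts P := by
  rw [← sum_fiberwise_of_maps_to (g := fun P : Finpartition s => #P.parts) (t := Icc 1 n)]
  · refine sum_congr rfl fun p _ => sum_congr rfl fun P hP => ?_
    rw [(mem_filter.1 hP).2]
  · intro P _
    exact mem_Icc.2 ⟨card_pos.2 (P.parts_nonempty hs.ne_empty), P.card_parts_le_card.trans hn⟩

end Finpartition

section SineCorrelation

variable {ι : Type*} [Fintype ι] [DecidableEq ι]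

noncomputable def sineCorrTerm (x : ι → ℝ) (m : ℕ) (P : Finpartition (univ : Finset ι)) : ℝ :=
  (1 / (m : ℝ) ^ Fintype.card ι) * (m.descFactorial #P.parts : ℝ) *
    ∏ b ∈ P.parts, (Matrix.of fun s t : b => sineq ((x s - x t) / m)).det

lemma prod_det_sineq_bot (x : ι → ℝ) (m : ℕ) :
    ∏ b ∈ (⊥ : Finpartition (univ : Finset ι)).parts,
      (Matrix.of fun s t : b => sineq ((x s - x t) / m)).det = 1 := by
  rw [Finpartition.parts_bot, prod_map]
  refine prod_eq_one fun a _ => ?_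
  simp [Matrix.det_unique, sineq]

lemma tendsto_sineCorrTerm_bot (x : ι → ℝ) :
    Tendsto (fun m => sineCorrTerm x m ⊥) atTop (𝓝 1) := by
  simp only [sineCorrTerm, prod_det_sineq_bot, Finpartition.card_bot, card_univ, mul_one,
    one_div_mul_eq_div]
  exact tendsto_descFactorial_div_pow_self _

lemma tendsto_sineCorrTerm_of_ne_bot (x : ι → ℝ) {P : Finpartition (univ : Finset ι)}
    (hP : P ≠ ⊥) : Tendsto (fun m => sineCorrTerm x m P) atTop (𝓝 0) := by
  have hlt : #P.parts < Fintype.card ι := P.card_parts_lt_card hP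
  simp only [sineCorrTerm, one_div_mul_eq_div]
  simpa using (tendsto_descFactorial_div_pow_of_lt hlt).mul
    (tendsto_finsetProd P.parts fun b _ => tendsto_det_sineq fun s : b => x s)

lemma tendsto_sum_sineCorrTerm (x : ι → ℝ) :
    Tendsto (fun m => ∑ P, sineCorrTerm x m P) atTop (𝓝 1) := by
  have hlim : ∀ P : Finpartition (univ : Finset ι),
      Tendsto (fun m => sineCorrTerm x m P) atTop (𝓝 (if P = ⊥ then 1 else 0)) := fun P => by
    split_ifs with hP
    · exact hP ▸ tendsto_sineCorrTerm_bot x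
    · exact tendsto_sineCorrTerm_of_ne_bot x hP
  simpa using tendsto_finsetSum univ fun P _ => hlim P

end SineCorrelation

/-- For fixed `k ≥ 1` and fixed `x ∈ ℝ^k`, the `k`-th correlation function of the superposition
of `m` independent sine processes each rescaled by `m`, namely
`Σ_{p=1}^{min(m,k)} Σ_{π ∈ 𝔖(k,p)} m^{-k} (m!/(m−p)!) Π_j det[q((x_s − x_t)/m)]_{s,t ∈ π_j}`,
converges to `1` as `m → ∞`. -/
theorem tendsto_superposition_sine_corr (k : ℕ) (hk : 1 ≤ k) (x : Fin k → ℝ) :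
    Tendsto (fun m : ℕ =>
        ∑ p ∈ Finset.Icc 1 (min m k),
          ∑ P ∈ Finset.univ.filter
              (fun P : Finpartition (Finset.univ : Finset (Fin k)) => P.parts.card = p),
            (1 / (m : ℝ) ^ k) * (m.descFactorial p : ℝ) *
              ∏ b ∈ P.parts,
                Matrix.det (Matrix.of fun s t : b => sineq (((x s : ℝ) - x t) / m)))
      atTop (nhds 1) := by
  have hne : (univ : Finset (Fin k)).Nonempty := univ_nonempty_iff.2 ⟨⟨0, hk⟩⟩
  refine (tendsto_sum_sineCorrTerm x).congr' ?_
  filter_upwards [eventually_ge_atTop k] with m hm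
  rw [min_eq_right hm, Finpartition.sum_Icc_sum_filter_card_parts hne (by simp)]
  simp only [sineCorrTerm, Fintype.card_fin]
end

section
/- For fixed z ∈ ℝ^k and η ∈ {0,1}^k with y_i = (2π/(mn)) z_i − x_i + 2πη_i + π, the quantity ∫_{[0,2π]^k} (2π)^{-k} · det[(2π/m) s_m(x_s − x_t)]_{s,t=1}^k · det[(2π/n) s_n(y_s − y_t)]_{s,t=1}^k dx converges to 1 as m, n → ∞. -/
/-!
For almost every `x`, no difference `x_s − x_t` (`s ≠ t`), nor its limit `x_t − x_s + 2π(η_s − η_t)`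
along the `y`-variables, lies in `2πℤ`. Since `|(2π/n) s_n(u)| ≤ 1/(n |sin(u/2)|)` away from `2πℤ`
and `(2π/n) s_n(0) = 1`, both matrices then tend entrywise to the identity, so both determinants
tend to `1`. Every entry has absolute value at most `1`, so the integrand is bounded by
`(2π)^{-k} (k!)²`, and dominated convergence gives the limit `(2π)^{-k} vol([0, 2π]^k) = 1`.
-/

open Real Filter MeasureTheory

/-- The kernel `s_n(u) = (1/(2π)) · sin(nu/2)/sin(u/2)`, extended by continuity at the
multiples of `2π` (where it takes the value `±n/(2π)`), via the Dirichlet-kernel cosine sum. -/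
noncomputable def sn (n : ℕ) (u : ℝ) : ℝ :=
  if Real.sin (u / 2) = 0 then
    (1 / (2 * Real.pi)) * ∑ j ∈ Finset.range n, Real.cos (((j : ℝ) - ((n : ℝ) - 1) / 2) * u)
  else (1 / (2 * Real.pi)) * Real.sin ((n : ℝ) * u / 2) / Real.sin (u / 2)
/-- The change of variables `y_i = (2π/(mn)) z_i − x_i + 2πη_i + π`. -/
noncomputable def yfun {k : ℕ} (z η : Fin k → ℝ) (m n : ℕ) (x : Fin k → ℝ) (i : Fin k) : ℝ :=
  2 * Real.pi / (m * n) * z i - x i + 2 * Real.pi * η i + Real.pi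

open Topology

lemma abs_sin_nat_mul_le (n : ℕ) (x : ℝ) : |sin (n * x)| ≤ n * |sin x| := by
  induction n with
  | zero => simp
  | succ n ih =>
    calc |sin ((n + 1 : ℕ) * x)| = |sin (n * x) * cos x + cos (n * x) * sin x| := by
          push_cast; rw [add_mul, one_mul, sin_add]
      _ ≤ |sin (n * x)| * |cos x| + |cos (n * x)| * |sin x| := by
          simpa only [abs_mul] using abs_add_le (sin (n * x) * cos x) (cos (n * x) * sin x)
      _ ≤ |sin (n * x)| * 1 + 1 * |sin x| := by
          gcongr <;> exact abs_cos_le_one _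
      _ ≤ (n + 1 : ℕ) * |sin x| := by push_cast; linarith

lemma measurable_sn (n : ℕ) : Measurable (sn n) := by
  unfold sn
  refine Measurable.ite ?_ (by fun_prop) (by fun_prop)
  exact measurableSet_eq_fun (by fun_prop) measurable_const

lemma abs_sn_le (n : ℕ) (u : ℝ) : |sn n u| ≤ n / (2 * π) := by
  unfold sn
  split_ifs with h
  · have hsum : |∑ j ∈ Finset.range n, cos ((j - ((n : ℝ) - 1) / 2) * u)| ≤ n := by
      simpa using Finset.abs_sum_le_sum_abs _ (Finset.range n) |>.trans
        (Finset.sum_le_sum fun j _ => abs_cos_le_one ((j - ((n : ℝ) - 1) / 2) * u))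
    rw [abs_mul, abs_of_pos (by positivity), one_div_mul_eq_div]
    gcongr
  · have hsin : |sin (n * u / 2)| ≤ n * |sin (u / 2)| := by
      simpa only [mul_div_assoc] using abs_sin_nat_mul_le n (u / 2)
    rw [abs_div, abs_mul, abs_of_pos (by positivity : 0 < 1 / (2 * π)),
      div_le_iff₀ (abs_pos.mpr h)]
    calc 1 / (2 * π) * |sin (n * u / 2)| ≤ 1 / (2 * π) * (n * |sin (u / 2)|) := by gcongr
      _ = n / (2 * π) * |sin (u / 2)| := by ring

lemma abs_two_pi_div_mul_sn_le_one (n : ℕ) (u : ℝ) : |2 * π / n * sn n u| ≤ 1 := by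
  rcases n.eq_zero_or_pos with rfl | hn
  · simp
  rw [abs_mul, abs_of_pos (by positivity)]
  calc 2 * π / n * |sn n u| ≤ 2 * π / n * (n / (2 * π)) := by gcongr; exact abs_sn_le n u
    _ = 1 := by field_simp

lemma two_pi_div_mul_sn_zero {n : ℕ} (hn : n ≠ 0) : 2 * π / n * sn n 0 = 1 := by
  simp only [sn, zero_div, sin_zero, if_true, mul_zero, cos_zero, Finset.sum_const,
    Finset.card_range, nsmul_eq_mul, mul_one]
  field_simp

lemma abs_two_pi_div_mul_sn_le {n : ℕ} {u : ℝ} (h : sin (u / 2) ≠ 0) :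
    |2 * π / n * sn n u| ≤ (n * |sin (u / 2)|)⁻¹ := by
  have heq : 2 * π / n * sn n u = sin (n * u / 2) / (n * sin (u / 2)) := by
    rw [sn, if_neg h]
    rcases eq_or_ne (n : ℝ) 0 with hn | hn
    · simp [hn]
    · field_simp
  rw [heq, abs_div, abs_mul, Nat.abs_cast, div_eq_mul_inv]
  exact mul_le_of_le_one_left (by positivity) (abs_sin_le_one _)

lemma tendsto_two_pi_div_mul_sn_zero {α : Type*} {l : Filter α} {N : α → ℕ} {u : α → ℝ}
    {u₀ : ℝ} (hN : Tendsto N l atTop) (hu : Tendsto u l (𝓝 u₀)) (h₀ : sin (u₀ / 2) ≠ 0) :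
    Tendsto (fun a => 2 * π / N a * sn (N a) (u a)) l (𝓝 0) := by
  have hsin : Tendsto (fun a => |sin (u a / 2)|) l (𝓝 |sin (u₀ / 2)|) :=
    ((continuous_sin.tendsto _).comp (hu.div_const 2)).abs
  have hbound : Tendsto (fun a => ((N a : ℝ) * |sin (u a / 2)|)⁻¹) l (𝓝 0) :=
    tendsto_inv_atTop_zero.comp
      ((tendsto_natCast_atTop_atTop.comp hN).atTop_mul_pos (abs_pos.mpr h₀) hsin)
  refine squeeze_zero_norm' ?_ hbound
  filter_upwards [hsin.eventually_ne (abs_pos.mpr h₀).ne'] with a ha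
  exact abs_two_pi_div_mul_sn_le (abs_ne_zero.mp ha)

lemma tendsto_det_of_tendsto_one {α ι R : Type*} [Fintype ι] [DecidableEq ι] [CommRing R]
    [TopologicalSpace R] [IsTopologicalRing R] {l : Filter α} {A : α → Matrix ι ι R}
    (h : ∀ i j, Tendsto (fun a => A a i j) l (𝓝 ((1 : Matrix ι ι R) i j))) :
    Tendsto (fun a => (A a).det) l (𝓝 1) := by
  simpa only [Matrix.det_one, Function.comp_def, id] using
    ((continuous_id.matrix_det).tendsto 1).comp (tendsto_pi_nhds.2 fun i => tendsto_pi_nhds.2 (h i))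

noncomputable def kernelMatrix {ι : Type*} (N : ℕ) (v : ι → ℝ) : Matrix ι ι ℝ :=
  Matrix.of fun s t => 2 * π / N * sn N (v s - v t)

section kernelMatrix

variable {ι : Type*} [Fintype ι] [DecidableEq ι]

lemma abs_det_kernelMatrix_le (N : ℕ) (v : ι → ℝ) :
    |(kernelMatrix N v).det| ≤ (Fintype.card ι).factorial := by
  refine (Matrix.det_le (abv := AbsoluteValue.abs) (x := 1) fun s t => ?_).trans (by simp)
  exact abs_two_pi_div_mul_sn_le_one N (v s - v t)

lemma measurable_det_kernelMatrix {α : Type*} [MeasurableSpace α] (N : ℕ) {v : α → ι → ℝ}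
    (hv : Measurable v) : Measurable fun a => (kernelMatrix N (v a)).det := by
  have hentry : ∀ s t, Measurable fun a => kernelMatrix N (v a) s t := fun s t =>
    ((measurable_sn N).comp ((measurable_pi_apply s).comp hv |>.sub
      ((measurable_pi_apply t).comp hv))).const_mul _
  simp only [Matrix.det_apply]
  fun_prop

lemma tendsto_det_kernelMatrix {α : Type*} {l : Filter α} {N : α → ℕ} {v : α → ι → ℝ}
    {w : ι → ι → ℝ} (hN : Tendsto N l atTop)
    (hv : ∀ i j, i ≠ j → Tendsto (fun a => v a i - v a j) l (𝓝 (w i j)))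
    (hw : ∀ i j, i ≠ j → sin (w i j / 2) ≠ 0) :
    Tendsto (fun a => (kernelMatrix (N a) (v a)).det) l (𝓝 1) := by
  refine tendsto_det_of_tendsto_one fun i j => ?_
  rcases eq_or_ne i j with rfl | hij
  · refine tendsto_const_nhds.congr' ?_
    filter_upwards [hN.eventually_ne_atTop 0] with a ha
    simp [kernelMatrix, two_pi_div_mul_sn_zero ha]
  · simpa [kernelMatrix, Matrix.one_apply_ne hij] using
      tendsto_two_pi_div_mul_sn_zero hN (hv i j hij) (hw i j hij)

end kernelMatrix

lemma volume_setOf_sub_eq_const {ι : Type*} [Fintype ι] {i j : ι} (hij : i ≠ j) (c : ℝ) :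
    volume {x : ι → ℝ | x i - x j = c} = 0 := by
  classical
  let f : (ι → ℝ) →ᵃ[ℝ] ℝ :=
    (LinearMap.proj (R := ℝ) (φ := fun _ : ι => ℝ) i - LinearMap.proj j).toAffineMap
  have hset : {x : ι → ℝ | x i - x j = c} = AffineSubspace.comap f (AffineSubspace.mk' c ⊥) := by
    ext x
    simp [f, AffineSubspace.mem_mk', sub_eq_zero]
  rw [hset]
  refine Measure.addHaar_affineSubspace _ _ fun htop => ?_
  have : Pi.single i (c + 1) ∈ {x : ι → ℝ | x i - x j = c} := by rw [hset, htop]; trivial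
  simp [Pi.single_eq_of_ne hij.symm] at this

lemma ae_sin_ne_zero {ι : Type*} [Fintype ι] {i j : ι} (hij : i ≠ j) (c : ℝ) :
    ∀ᵐ x : ι → ℝ, sin ((x i - x j + c) / 2) ≠ 0 := by
  rw [ae_iff]
  refine measure_mono_null (fun x hx => ?_)
    (measure_iUnion_null fun n : ℤ => volume_setOf_sub_eq_const hij (2 * n * π - c))
  obtain ⟨n, hn⟩ := sin_eq_zero_iff.mp (not_not.mp hx)
  exact Set.mem_iUnion.mpr ⟨n, by simp only [Set.mem_ofPred_eq]; linarith⟩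

lemma ae_forall_sin_ne_zero {ι : Type*} [Fintype ι] (c : ι → ι → ℝ) :
    ∀ᵐ x : ι → ℝ, ∀ i j, i ≠ j → sin ((x i - x j + c i j) / 2) ≠ 0 := by
  simp only [ae_all_iff]
  intro i j hij
  exact ae_sin_ne_zero hij (c i j)

lemma measurable_yfun {k : ℕ} (z η : Fin k → ℝ) (m n : ℕ) : Measurable (yfun z η m n) := by
  unfold yfun
  fun_prop

lemma tendsto_yfun_sub {k : ℕ} (z η x : Fin k → ℝ) (i j : Fin k) :
    Tendsto (fun mn : ℕ × ℕ => yfun z η mn.1 mn.2 x i - yfun z η mn.1 mn.2 x j)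
      (atTop ×ˢ atTop) (𝓝 (x j - x i + 2 * π * (η i - η j))) := by
  have hcoeff : Tendsto (fun mn : ℕ × ℕ => 2 * π / (mn.1 * mn.2 : ℝ)) (atTop ×ˢ atTop) (𝓝 0) :=
    tendsto_const_nhds.div_atTop <| (tendsto_natCast_atTop_atTop.comp tendsto_fst).atTop_mul_atTop₀
      (tendsto_natCast_atTop_atTop.comp tendsto_snd)
  have hlim := (hcoeff.mul_const (z i - z j)).add_const (x j - x i + 2 * π * (η i - η j))
  rw [zero_mul, zero_add] at hlim
  refine hlim.congr fun mn => ?_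
  simp only [yfun]
  ring

lemma ae_tendsto_det_mul_det {k : ℕ} (z η : Fin k → ℝ) :
    ∀ᵐ x : Fin k → ℝ, Tendsto (fun mn : ℕ × ℕ =>
      (kernelMatrix mn.1 x).det * (kernelMatrix mn.2 (yfun z η mn.1 mn.2 x)).det)
      (atTop ×ˢ atTop) (𝓝 1) := by
  filter_upwards [ae_forall_sin_ne_zero fun _ _ => 0,
    ae_forall_sin_ne_zero fun s t => 2 * π * (η t - η s)] with x hx hy
  have hX : Tendsto (fun mn : ℕ × ℕ => (kernelMatrix mn.1 x).det) (atTop ×ˢ atTop) (𝓝 1) :=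
    tendsto_det_kernelMatrix (w := fun s t => x s - x t) tendsto_fst
      (fun _ _ _ => tendsto_const_nhds) fun s t hst => by simpa using hx s t hst
  have hY : Tendsto (fun mn : ℕ × ℕ => (kernelMatrix mn.2 (yfun z η mn.1 mn.2 x)).det)
      (atTop ×ˢ atTop) (𝓝 1) :=
    tendsto_det_kernelMatrix (w := fun s t => x t - x s + 2 * π * (η s - η t))
      tendsto_snd (fun s t _ => tendsto_yfun_sub z η x s t) fun s t hst => hy t s hst.symm
  simpa using hX.mul hY

theorem tendsto_integral_det_det_general (k : ℕ) (z η : Fin k → ℝ) :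
    Tendsto (fun mn : ℕ × ℕ =>
        ∫ x in (Set.univ.pi fun _ : Fin k => Set.Icc (0 : ℝ) (2 * Real.pi)),
          (1 / (2 * Real.pi) ^ k) *
            Matrix.det (Matrix.of fun s t : Fin k =>
              2 * Real.pi / mn.1 * sn mn.1 (x s - x t)) *
            Matrix.det (Matrix.of fun s t : Fin k =>
              2 * Real.pi / mn.2 *
                sn mn.2 (yfun z η mn.1 mn.2 x s - yfun z η mn.1 mn.2 x t)))
      (atTop ×ˢ atTop) (nhds 1) := by
  set I := Set.univ.pi fun _ : Fin k => Set.Icc (0 : ℝ) (2 * π)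
  change Tendsto (fun mn : ℕ × ℕ => ∫ x in I, 1 / (2 * π) ^ k * (kernelMatrix mn.1 x).det *
    (kernelMatrix mn.2 (yfun z η mn.1 mn.2 x)).det) _ _
  have hI : volume.real I = (2 * π) ^ k := by
    simp [I, measureReal_def, Real.volume_Icc_pi, pi_nonneg]
  have hmeas : ∀ mn : ℕ × ℕ, Measurable fun x : Fin k → ℝ => 1 / (2 * π) ^ k *
      (kernelMatrix mn.1 x).det * (kernelMatrix mn.2 (yfun z η mn.1 mn.2 x)).det := fun mn =>
    ((measurable_det_kernelMatrix _ measurable_id).const_mul _).mul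
      (measurable_det_kernelMatrix _ (measurable_yfun z η _ _))
  have hbound : ∀ (mn : ℕ × ℕ) (x : Fin k → ℝ), ‖1 / (2 * π) ^ k * (kernelMatrix mn.1 x).det *
      (kernelMatrix mn.2 (yfun z η mn.1 mn.2 x)).det‖ ≤
        1 / (2 * π) ^ k * k.factorial * k.factorial := by
    intro mn x
    rw [Real.norm_eq_abs, abs_mul, abs_mul, abs_of_pos (by positivity)]
    gcongr <;> exact (abs_det_kernelMatrix_le _ _).trans_eq (by simp)
  have hlim : ∀ᵐ x ∂volume.restrict I, Tendsto (fun mn : ℕ × ℕ => 1 / (2 * π) ^ k *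
      (kernelMatrix mn.1 x).det * (kernelMatrix mn.2 (yfun z η mn.1 mn.2 x)).det)
        (atTop ×ˢ atTop) (𝓝 (1 / (2 * π) ^ k)) :=
    ae_restrict_of_ae <| (ae_tendsto_det_mul_det z η).mono fun x hx => by
      simpa only [mul_assoc, mul_one] using hx.const_mul (1 / (2 * π) ^ k)
  have := tendsto_integral_filter_of_dominated_convergence _
    (.of_forall fun mn => (hmeas mn).aestronglyMeasurable)
    (.of_forall fun mn => ae_of_all _ (hbound mn))
    (integrableOn_const (isCompact_univ_pi fun _ => isCompact_Icc).measure_ne_top) hlim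
  rwa [setIntegral_const, hI, smul_eq_mul, mul_one_div_cancel (by positivity)] at this

/-- For fixed `z ∈ ℝ^k` and `η ∈ {0,1}^k`, with `y_i = (2π/(mn)) z_i − x_i + 2πη_i + π`,
`∫_{[0,2π]^k} (2π)^{-k} det[(2π/m) s_m(x_s − x_t)] · det[(2π/n) s_n(y_s − y_t)] dx → 1`
as `m, n → ∞`. -/
theorem tendsto_integral_det_det (k : ℕ) (hk : 1 ≤ k) (z η : Fin k → ℝ)
    (hη : ∀ i, η i = 0 ∨ η i = 1) :
    Tendsto (fun mn : ℕ × ℕ =>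
        ∫ x in (Set.univ.pi fun _ : Fin k => Set.Icc (0 : ℝ) (2 * Real.pi)),
          (1 / (2 * Real.pi) ^ k) *
            Matrix.det (Matrix.of fun s t : Fin k =>
              2 * Real.pi / mn.1 * sn mn.1 (x s - x t)) *
            Matrix.det (Matrix.of fun s t : Fin k =>
              2 * Real.pi / mn.2 *
                sn mn.2 (yfun z η mn.1 mn.2 x s - yfun z η mn.1 mn.2 x t)))
      (atTop ×ˢ atTop) (nhds 1) :=
  tendsto_integral_det_det_general k z η
end
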